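/- arXiv:2307.07660 — 2 statements merged into one kernel-verified Lean document; each statement's English description precedes it below -/
import Mathlib

section
/- For all positive integers n, the n-th harmonic number satisfies H_n < ln n + γ + 1/(2n), where γ is the Euler–Mascheroni constant (Franel's inequality). -/
/-!
For `x > 1` we have `log x < sinh (log x) = (x - x⁻¹) / 2`. At `x = (n + 1) / n` the right-hand
side is `1 / (2n) + 1 / (2(n + 1))`, which says exactly that `H_n - log n - 1 / (2n)` is strictly
increasing for `n ≥ 1`. This sequence tends to `γ`, so each of its terms lies strictly below `γ`.
-/

open Real Filter Topology

theorem Real.log_lt_sub_inv_div_two {x : ℝ} (hx : 1 < x) : log x < (x - x⁻¹) / 2 := by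
  rw [← sinh_log (by positivity)]
  exact self_lt_sinh_iff.mpr (log_pos hx)

noncomputable def franelSeq (n : ℕ) : ℝ := harmonic n - log n - 1 / (2 * n)

lemma franelSeq_lt_succ {n : ℕ} (hn : n ≠ 0) : franelSeq n < franelSeq (n + 1) := by
  have hn' : (0 : ℝ) < n := by positivity
  have hlog := log_lt_sub_inv_div_two (x := (n + 1) / n) (by rw [one_lt_div hn']; linarith)
  rw [log_div (by positivity) hn'.ne', inv_div] at hlog
  have hgap : ((n + 1) / n - n / (n + 1) : ℝ) / 2 =
      1 / (2 * n) + ((n : ℝ) + 1)⁻¹ - 1 / (2 * (n + 1)) := by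
    field_simp; ring
  simp only [franelSeq, harmonic_succ]
  push_cast
  linarith

lemma tendsto_franelSeq : Tendsto franelSeq atTop (𝓝 eulerMascheroniConstant) := by
  have h := tendsto_harmonic_sub_log.sub
    ((tendsto_one_div_atTop_nhds_zero_nat (𝕜 := ℝ)).div_const 2)
  rw [zero_div, sub_zero] at h
  refine h.congr fun m ↦ ?_
  rw [franelSeq]
  ring

lemma franelSeq_lt_eulerMascheroniConstant {n : ℕ} (hn : n ≠ 0) :
    franelSeq n < eulerMascheroniConstant := by
  have hmono : Monotone fun m ↦ franelSeq (m + 1) :=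
    monotone_nat_of_le_succ fun m ↦ (franelSeq_lt_succ m.succ_ne_zero).le
  calc franelSeq n < franelSeq (n + 1) := franelSeq_lt_succ hn
    _ ≤ eulerMascheroniConstant :=
      hmono.ge_of_tendsto ((tendsto_add_atTop_iff_nat 1).mpr tendsto_franelSeq) n

/-- Franel's inequality: for all positive integers `n`,
`H_n < ln n + γ + 1/(2n)`. -/
theorem franel_inequality (n : ℕ) (hn : 1 ≤ n) :
    (harmonic n : ℝ) <
      Real.log n + Real.eulerMascheroniConstant + 1 / (2 * n) := by
  have h := franelSeq_lt_eulerMascheroniConstant (Nat.one_le_iff_ne_zero.mp hn)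
  rw [franelSeq] at h
  linarith
end

section
/- Consider n items x_1 < ... < x_n with independent uniformly random distinct priorities, and let the depth D_j of x_j be 1 plus the number of indices i ≠ j such that x_i has the maximum priority among the consecutive range between x_i and x_j. Then E[D_j] = H_j + H_{n−j+1} − 1, where H_m is the m-th harmonic number. -/
open MeasureTheory ProbabilityTheory
open scoped Classical

open Finset

/-! A given `x_i` with `i ≠ j` counts towards the depth of `x_j` exactly when its priority is the
strict maximum of the `|i - j| + 1` consecutive priorities from `i` to `j`. Independent,
identically distributed priorities have a joint law invariant under permuting the indices, and ties
have probability zero, so each index of a block of size `m` is the strict maximum with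
probability `1/m`. By linearity of expectation,
`E[D_j] = 1 + ∑_{i<j} 1/(j-i+1) + ∑_{i>j} 1/(i-j+1) = 1 + (H_j - 1) + (H_{n-j+1} - 1)`. -/

section StrictMax

variable {Ω ι : Type*} {X : ι → Ω → ℝ}

lemma pairwise_disjoint_strictMax :
    Pairwise fun i j => Disjoint {ω | ∀ k ≠ i, X k ω < X i ω} {ω | ∀ k ≠ j, X k ω < X j ω} :=
  fun i j hij => Set.disjoint_left.2 fun _ hi hj => (hi j hij.symm).asymm (hj i hij)

variable [MeasurableSpace Ω] {μ : Measure Ω}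

lemma measurableSet_strictMax [Countable ι] (hX : ∀ i, Measurable (X i)) (i : ι) :
    MeasurableSet {ω | ∀ k ≠ i, X k ω < X i ω} := by
  simp only [Set.ofPred_forall]
  exact .iInter fun k => .iInter fun _ => measurableSet_lt (hX k) (hX i)

lemma map_comp_perm_eq_map [Fintype ι] (hX : ∀ i, Measurable (X i)) (hindep : iIndepFun X μ)
    (hident : ∀ i j, μ.map (X i) = μ.map (X j)) (σ : Equiv.Perm ι) :
    μ.map (fun ω k => X (σ k) ω) = μ.map (fun ω k => X k ω) := by
  rw [(hindep.precomp σ.injective).map_fun_eq_pi_map fun k => (hX (σ k)).aemeasurable,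
    hindep.map_fun_eq_pi_map fun k => (hX k).aemeasurable]
  exact congrArg Measure.pi (funext fun k => hident (σ k) k)

lemma measure_strictMax_perm [Fintype ι] (hX : ∀ i, Measurable (X i)) (hindep : iIndepFun X μ)
    (hident : ∀ i j, μ.map (X i) = μ.map (X j)) (σ : Equiv.Perm ι) (i : ι) :
    μ {ω | ∀ k ≠ σ i, X k ω < X (σ i) ω} = μ {ω | ∀ k ≠ i, X k ω < X i ω} := by
  set B : Set (ι → ℝ) := {x | ∀ k ≠ i, x k < x i}
  have hB : MeasurableSet B := measurableSet_strictMax (fun k => measurable_pi_apply k) i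
  have hpre : {ω | ∀ k ≠ σ i, X k ω < X (σ i) ω} = (fun ω k => X (σ k) ω) ⁻¹' B := by
    ext ω
    simp only [B, Set.mem_ofPred_eq, Set.mem_preimage]
    exact ⟨fun h k hk => h (σ k) (σ.injective.ne hk),
      fun h k hk => by simpa using h (σ.symm k) (by rintro rfl; simp at hk)⟩
  rw [hpre, ← Measure.map_apply (measurable_pi_lambda _ fun k => hX (σ k)) hB,
    map_comp_perm_eq_map hX hindep hident, Measure.map_apply (measurable_pi_lambda _ hX) hB]
  rfl

lemma measure_iUnion_strictMax [Fintype ι] [Nonempty ι] [IsProbabilityMeasure μ]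
    (hX : ∀ i, Measurable (X i)) (hdistinct : ∀ i j, i ≠ j → μ {ω | X i ω = X j ω} = 0) :
    μ (⋃ i, {ω | ∀ k ≠ i, X k ω < X i ω}) = 1 := by
  refine (prob_compl_eq_zero_iff (.iUnion (measurableSet_strictMax hX))).1 ?_
  have hties : (⋃ i, {ω | ∀ k ≠ i, X k ω < X i ω})ᶜ
      ⊆ ⋃ i, ⋃ j, ⋃ (_ : i ≠ j), {ω | X i ω = X j ω} := by
    intro ω hω
    obtain ⟨i, hi⟩ := Finite.exists_max fun k => X k ω
    have hnot : ¬ ∀ k ≠ i, X k ω < X i ω := fun h => hω (Set.mem_iUnion.2 ⟨i, h⟩)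
    push Not at hnot
    obtain ⟨k, hki, hle⟩ := hnot
    simp only [Set.mem_iUnion]
    exact ⟨k, i, hki, le_antisymm (hi k) hle⟩
  exact measure_mono_null hties (measure_iUnion_null fun i => measure_iUnion_null fun j =>
    measure_iUnion_null fun hij => hdistinct i j hij)

theorem measure_strictMax [Fintype ι] (hX : ∀ i, Measurable (X i)) (hindep : iIndepFun X μ)
    (hident : ∀ i j, μ.map (X i) = μ.map (X j))
    (hdistinct : ∀ i j, i ≠ j → μ {ω | X i ω = X j ω} = 0) (i : ι) :
    μ {ω | ∀ k ≠ i, X k ω < X i ω} = (Fintype.card ι : ENNReal)⁻¹ := by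
  have := hindep.isProbabilityMeasure
  have : Nonempty ι := ⟨i⟩
  have hsym : ∀ a, μ {ω | ∀ k ≠ a, X k ω < X a ω} = μ {ω | ∀ k ≠ i, X k ω < X i ω} := fun a => by
    simpa using measure_strictMax_perm hX hindep hident (Equiv.swap i a) i
  refine ENNReal.eq_inv_of_mul_eq_one_left ?_
  calc μ {ω | ∀ k ≠ i, X k ω < X i ω} * Fintype.card ι
      = ∑ a, μ {ω | ∀ k ≠ a, X k ω < X a ω} := by simp [hsym, mul_comm]
    _ = 1 := by
        rw [← measure_iUnion_strictMax hX hdistinct, measure_iUnion pairwise_disjoint_strictMax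
          (measurableSet_strictMax hX), tsum_fintype]

lemma measurableSet_strictMaxOn [Countable ι] (hX : ∀ i, Measurable (X i)) (S : Finset ι)
    (i : ι) : MeasurableSet {ω | ∀ k ∈ S, k ≠ i → X k ω < X i ω} := by
  simp only [Set.ofPred_forall]
  exact .iInter fun k => .iInter fun _ => .iInter fun _ => measurableSet_lt (hX k) (hX i)

theorem measureReal_strictMaxOn (hX : ∀ i, Measurable (X i)) (hindep : iIndepFun X μ)
    (hident : ∀ i j, μ.map (X i) = μ.map (X j))
    (hdistinct : ∀ i j, i ≠ j → μ {ω | X i ω = X j ω} = 0) {S : Finset ι} {i : ι} (hi : i ∈ S) :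
    μ.real {ω | ∀ k ∈ S, k ≠ i → X k ω < X i ω} = (#S : ℝ)⁻¹ := by
  have hevent : {ω | ∀ k ∈ S, k ≠ i → X k ω < X i ω}
      = {ω | ∀ k : S, k ≠ ⟨i, hi⟩ → X k ω < X i ω} := by
    ext ω
    simp only [Set.mem_ofPred_eq, Subtype.forall, ne_eq, Subtype.mk.injEq]
  rw [measureReal_def, hevent, measure_strictMax (X := fun k : S => X k) (i := ⟨i, hi⟩)
    (fun k => hX k) (hindep.precomp Subtype.val_injective) (fun k l => hident k l)
    (fun k l hkl => hdistinct k l (Subtype.val_injective.ne hkl)), Fintype.card_coe,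
    ENNReal.toReal_inv, ENNReal.toReal_natCast]

end StrictMax

lemma natCast_card_filter_eq_sum_indicator {Ω ι : Type*} (s : Finset ι) (p : ι → Ω → Prop)
    [∀ i ω, Decidable (p i ω)] (ω : Ω) :
    (#(s.filter (p · ω)) : ℝ) = ∑ i ∈ s, {ω | p i ω}.indicator 1 ω := by
  rw [natCast_card_filter]
  simp only [Set.indicator_apply, Set.mem_ofPred_eq, Pi.one_apply]

section CardFilter

variable {Ω ι : Type*} [MeasurableSpace Ω] {μ : Measure Ω} [IsFiniteMeasure μ]
  {s : Finset ι} {p : ι → Ω → Prop} [∀ i ω, Decidable (p i ω)]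

lemma integrable_card_filter (hp : ∀ i ∈ s, MeasurableSet {ω | p i ω}) :
    Integrable (fun ω => (#(s.filter (p · ω)) : ℝ)) μ := by
  simp_rw [natCast_card_filter_eq_sum_indicator]
  exact integrable_finsetSum _ fun i hi => (integrable_const 1).indicator (hp i hi)

lemma integral_card_filter (hp : ∀ i ∈ s, MeasurableSet {ω | p i ω}) :
    ∫ ω, (#(s.filter (p · ω)) : ℝ) ∂μ = ∑ i ∈ s, μ.real {ω | p i ω} := by
  simp_rw [natCast_card_filter_eq_sum_indicator]
  rw [integral_finsetSum _ fun i hi => (integrable_const 1).indicator (hp i hi)]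
  exact sum_congr rfl fun i hi => integral_indicator_one (hp i hi)

end CardFilter

lemma sum_Ioc_one_inv_eq_harmonic_sub_one {m : ℕ} (hm : 1 ≤ m) :
    ∑ d ∈ Ioc 1 m, (d : ℝ)⁻¹ = harmonic m - 1 := by
  rw [harmonic_eq_sum_Icc, Rat.cast_sum, Icc_eq_cons_Ioc hm, sum_cons]
  simp

lemma sum_erase_inv_card_Icc_min_max {n j : ℕ} (hj1 : 1 ≤ j) (hjn : j ≤ n) :
    ∑ i ∈ (Icc 1 n).erase j, (#(Icc (min i j) (max i j)) : ℝ)⁻¹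
      = (harmonic j : ℝ) + harmonic (n - j + 1) - 2 := by
  have hsplit : (Icc 1 n).erase j = Ico 1 j ∪ Ioc j n := by
    ext i; simp only [mem_erase, mem_Icc, mem_union, mem_Ico, mem_Ioc]; omega
  have hleft : ∑ i ∈ Ico 1 j, (#(Icc (min i j) (max i j)) : ℝ)⁻¹ = ∑ d ∈ Ioc 1 j, (d : ℝ)⁻¹ := by
    refine sum_nbij' (fun i => j + 1 - i) (fun d => j + 1 - d) ?_ ?_ ?_ ?_ fun i hi => ?_
    any_goals intro i hi; simp only [mem_Ico, mem_Ioc] at hi ⊢; omega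
    rw [mem_Ico] at hi
    rw [min_eq_left hi.2.le, max_eq_right hi.2.le, Nat.card_Icc]
  have hright : ∑ i ∈ Ioc j n, (#(Icc (min i j) (max i j)) : ℝ)⁻¹
      = ∑ d ∈ Ioc 1 (n - j + 1), (d : ℝ)⁻¹ := by
    refine sum_nbij' (fun i => i + 1 - j) (fun d => d + j - 1) ?_ ?_ ?_ ?_ fun i hi => ?_
    any_goals intro i hi; simp only [mem_Ioc] at hi ⊢; omega
    rw [mem_Ioc] at hi
    rw [min_eq_right hi.1.le, max_eq_left hi.1.le, Nat.card_Icc]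
  have hdisj : Disjoint (Ico 1 j) (Ioc j n) :=
    disjoint_left.2 fun i hi hi' => by simp only [mem_Ico, mem_Ioc] at hi hi'; omega
  rw [hsplit, sum_union hdisj, hleft, hright, sum_Ioc_one_inv_eq_harmonic_sub_one hj1,
    sum_Ioc_one_inv_eq_harmonic_sub_one (by omega)]
  ring

/-- With `n` items `x_1 < ... < x_n` (indexed by `1, ..., n`)
assigned i.i.d. priorities from a continuous distribution, and the depth `D_j`
of `x_j` defined as `1` plus the number of indices `i ≠ j` such that `x_i` has
the strictly maximum priority among the consecutive items between `i` and `j`,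
we have `E[D_j] = H_j + H_{n−j+1} − 1`. -/
theorem expected_depth_harmonic
    {Ω : Type*} [MeasureSpace Ω] [IsProbabilityMeasure (ℙ : Measure Ω)]
    (n : ℕ) (P : ℕ → Ω → ℝ)
    (hmeas : ∀ i, Measurable (P i))
    (hindep : iIndepFun P ℙ)
    (hident : ∀ i j, Measure.map (P i) ℙ = Measure.map (P j) ℙ)
    (hdistinct : ∀ i j, i ≠ j → ℙ {ω | P i ω = P j ω} = 0)
    (j : ℕ) (hj1 : 1 ≤ j) (hjn : j ≤ n) :
    ∫ ω, ((1 + ((Finset.Icc 1 n).filter (fun i => i ≠ j ∧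
        ∀ k ∈ Finset.Icc (min i j) (max i j), k ≠ i → P k ω < P i ω)).card : ℕ) : ℝ) ∂ℙ =
      (harmonic j : ℝ) + (harmonic (n - j + 1) : ℝ) - 1 := by
  have hfilter : ∀ ω, (Icc 1 n).filter (fun i => i ≠ j ∧
      ∀ k ∈ Icc (min i j) (max i j), k ≠ i → P k ω < P i ω) = ((Icc 1 n).erase j).filter
        (fun i => ∀ k ∈ Icc (min i j) (max i j), k ≠ i → P k ω < P i ω) := by
    intro ω; ext i; simp only [mem_filter, mem_erase]; tauto
  have hA := fun i => measurableSet_strictMaxOn hmeas (Icc (min i j) (max i j)) i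
  simp_rw [hfilter, Nat.cast_add, Nat.cast_one]
  rw [integral_add (integrable_const 1) (integrable_card_filter fun i _ => hA i),
    integral_card_filter fun i _ => hA i, integral_const, probReal_univ, one_smul,
    sum_congr rfl fun i _ => measureReal_strictMaxOn hmeas hindep hident hdistinct
      (mem_Icc.2 ⟨min_le_left i j, le_max_left i j⟩),
    sum_erase_inv_card_Icc_min_max hj1 hjn]
  ring
end
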